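/- arXiv:2202.05550 — 7 statements merged into one kernel-verified Lean document; each statement's English description precedes it below -/
import Mathlib

section
/- A factorial basis B = ⟨P_k(x)⟩_{k=0}^∞ of K[x] is (A,B)-compatible with a K-linear operator L : K[x] → K[x] if and only if both of the following hold: (C1) deg L P_k(x) ≤ k + B for all k ≥ 0, and (C2) P_{k−A}(x) divides L P_k(x) in K[x] for all k ≥ A. -/
open Polynomial Finset

/-- A *factorial basis* of `K[x]`: `deg P_k = k` and `P_k ∣ P_{k+1}` for all `k`. -/
def IsFactorialBasis (K : Type*) [Field K] (P : ℕ → Polynomial K) : Prop :=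
  ∀ k : ℕ, (P k).degree = (k : ℕ) ∧ P k ∣ P (k + 1)

/-- Extension of a sequence of polynomials to integer indices, zero for negative indices. -/
noncomputable def zext {K : Type*} [Field K] (P : ℕ → Polynomial K) : ℤ → Polynomial K :=
  fun j => if 0 ≤ j then P j.toNat else 0

/-- `(A,B)`-compatibility of a basis `P` with an operator `L`:
`L P_k = ∑_{i=-A}^{B} α_{k,i} P_{k+i}` (with `P_j = 0` for `j < 0`). -/
def IsCompatible {K : Type*} [Field K] (P : ℕ → Polynomial K)
    (L : Polynomial K → Polynomial K) (A B : ℕ) : Prop :=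
  ∀ k : ℕ, ∃ α : ℤ → K,
    L (P k) = ∑ i ∈ Finset.Icc (-(A : ℤ)) (B : ℤ), α i • zext P ((k : ℤ) + i)

/-!
A factorial basis is triangular: a polynomial of degree `≤ n` divisible by `P_m` is a combination
of `P_m, …, P_n`, obtained by cancelling its coefficient of `x^n` against `P_n` (which is again
divisible by `P_m`) and descending. Hence (C1) and (C2) together say exactly that `L P_k` lies in
the span of `P_{k-A}, …, P_{k+B}`, which is compatibility once the indices `k + i < 0` (where
`P_{k+i} = 0`) are discarded. For `k < A`, (C2) is automatic since `P_0` is a unit.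
-/

theorem Polynomial.degree_sub_C_mul_lt {K : Type*} [Field K] {p q : K[X]} {n : ℕ}
    (hp : p.degree < ↑(n + 1)) (hq : q.degree = n) :
    (p - C (p.coeff n / q.leadingCoeff) * q).degree < n := by
  have hq0 : q ≠ 0 := by rintro rfl; simp at hq
  rw [degree_lt_iff_coeff_zero]
  intro j hj
  rcases hj.eq_or_lt with rfl | hlt
  · have hlc : q.leadingCoeff = q.coeff n := by
      rw [leadingCoeff, natDegree_eq_of_degree_eq_some hq]
    rw [coeff_sub, coeff_C_mul, ← hlc, div_mul_cancel₀ _ (leadingCoeff_ne_zero.mpr hq0), sub_self]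
  · rw [coeff_sub, coeff_C_mul, coeff_eq_zero_of_degree_lt (hp.trans_le (by exact_mod_cast hlt)),
      coeff_eq_zero_of_degree_lt (hq.trans_lt (by exact_mod_cast hlt)), mul_zero, sub_zero]

namespace IsFactorialBasis

variable {K : Type*} [Field K] {P : ℕ → K[X]}

theorem dvd_of_le (hP : IsFactorialBasis K P) {m n : ℕ} (h : m ≤ n) : P m ∣ P n := by
  induction n, h using Nat.le_induction with
  | base => exact dvd_rfl
  | succ n _ ih => exact ih.trans (hP n).2

theorem isUnit_zero (hP : IsFactorialBasis K P) : IsUnit (P 0) :=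
  isUnit_iff_degree_eq_zero.mpr (hP 0).1

theorem eq_zero_of_dvd_of_degree_lt (hP : IsFactorialBasis K P) {m : ℕ} {Q : K[X]}
    (hdvd : P m ∣ Q) (hdeg : Q.degree < m) : Q = 0 := by
  by_contra hQ
  have := degree_le_of_dvd hdvd hQ
  rw [(hP m).1] at this
  exact (this.trans_lt hdeg).false

open Submodule in
theorem mem_span_Ico_of_dvd_of_degree_lt (hP : IsFactorialBasis K P) {m n : ℕ} {Q : K[X]}
    (hdvd : P m ∣ Q) (hdeg : Q.degree < n) : Q ∈ span K (P '' Set.Ico m n) := by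
  induction n generalizing Q with
  | zero =>
    rw [hP.eq_zero_of_dvd_of_degree_lt hdvd (hdeg.trans_le (by exact_mod_cast m.zero_le))]
    exact zero_mem _
  | succ n ih =>
    by_cases hmn : m ≤ n
    · set d := Q.coeff n / (P n).leadingCoeff
      have hR : Q - C d * P n ∈ span K (P '' Set.Ico m n) :=
        ih (dvd_sub hdvd ((hP.dvd_of_le hmn).mul_left _)) (degree_sub_C_mul_lt hdeg (hP n).1)
      have hPn : P n ∈ span K (P '' Set.Ico m (n + 1)) :=
        subset_span ⟨n, ⟨hmn, n.lt_add_one⟩, rfl⟩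
      have hQ : Q = (Q - C d * P n) + d • P n := by rw [smul_eq_C_mul, sub_add_cancel]
      rw [hQ]
      exact add_mem (span_mono (Set.image_mono (Set.Ico_subset_Ico_right n.le_succ)) hR)
        (smul_mem _ _ hPn)
    · rw [hP.eq_zero_of_dvd_of_degree_lt hdvd (hdeg.trans_le (by exact_mod_cast not_le.mp hmn))]
      exact zero_mem _

open Submodule in
theorem mem_span_Icc_iff (hP : IsFactorialBasis K P) {m n : ℕ} {Q : K[X]} :
    Q ∈ span K (P '' Set.Icc m n) ↔ Q.degree ≤ n ∧ P m ∣ Q := by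
  constructor
  · intro hQ
    have hle : span K (P '' Set.Icc m n) ≤
        degreeLE K n ⊓ (Ideal.span {P m}).restrictScalars K := by
      rw [span_le]
      rintro _ ⟨j, ⟨hmj, hjn⟩, rfl⟩
      exact Submodule.mem_inf.mpr ⟨mem_degreeLE.mpr ((hP j).1.trans_le (by exact_mod_cast hjn)),
        Ideal.mem_span_singleton.mpr (hP.dvd_of_le hmj)⟩
    obtain ⟨hdeg, hdvd⟩ := Submodule.mem_inf.mp (hle hQ)
    exact ⟨mem_degreeLE.mp hdeg, Ideal.mem_span_singleton.mp hdvd⟩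
  · rintro ⟨hdeg, hdvd⟩
    rw [← Set.Ico_add_one_right_eq_Icc]
    exact hP.mem_span_Ico_of_dvd_of_degree_lt hdvd (by
      rw [← mem_degreeLT, degreeLT_succ_eq_degreeLE, mem_degreeLE]; exact hdeg)

end IsFactorialBasis

theorem sum_Icc_smul_zext {K : Type*} [Field K] (P : ℕ → K[X]) (α : ℤ → K) (k A B : ℕ) :
    ∑ i ∈ Icc (-(A : ℤ)) B, α i • zext P (k + i) =
      ∑ j ∈ Icc (k - A) (k + B), α (j - k) • P j := by
  have hinj : Set.InjOn (fun j : ℕ => (j : ℤ) - k) (Icc (k - A) (k + B)) :=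
    fun x _ y _ h => by simpa using h
  have hsub : (Icc (k - A) (k + B)).image (fun j : ℕ => (j : ℤ) - k) ⊆ Icc (-(A : ℤ)) B := by
    intro i hi
    simp only [mem_image, mem_Icc] at hi ⊢
    omega
  rw [← sum_subset hsub, sum_image hinj]
  · refine sum_congr rfl fun j _ => ?_
    simp [zext]
  · intro i hi hni
    have hneg : k + i < 0 := by
      by_contra h
      apply hni
      simp only [mem_image, mem_Icc] at hi ⊢
      exact ⟨(k + i).toNat, by omega, by omega⟩
    simp [zext, hneg.not_ge]

theorem isCompatible_iff_forall_mem_span {K : Type*} [Field K] (P : ℕ → K[X])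
    (L : K[X] → K[X]) (A B : ℕ) :
    IsCompatible P L A B ↔ ∀ k, L (P k) ∈ Submodule.span K (P '' Set.Icc (k - A) (k + B)) := by
  simp only [IsCompatible, sum_Icc_smul_zext, ← Finset.coe_Icc,
    Submodule.mem_span_image_finset_iff_exists_fun']
  refine forall_congr' fun k => ⟨fun ⟨α, h⟩ => ⟨fun j => α (j - k), h.symm⟩,
    fun ⟨c, h⟩ => ⟨fun i => c (k + i).toNat, ?_⟩⟩
  rw [← h]
  exact sum_congr rfl fun j _ => by simp

/-- A factorial basis `P` is `(A,B)`-compatible with a `K`-linear operator `L` iff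
(C1) `deg (L P_k) ≤ k + B` for all `k`, and (C2) `P_{k-A} ∣ L P_k` for all `k ≥ A`. -/
theorem isCompatible_iff {K : Type*} [Field K] (P : ℕ → Polynomial K)
    (hP : IsFactorialBasis K P) (L : Polynomial K →ₗ[K] Polynomial K) (A B : ℕ) :
    IsCompatible P (⇑L) A B ↔
      ((∀ k : ℕ, (L (P k)).degree ≤ ((k + B : ℕ) : ℕ)) ∧
       (∀ k : ℕ, A ≤ k → P (k - A) ∣ L (P k))) := by
  rw [isCompatible_iff_forall_mem_span]
  simp only [hP.mem_span_Icc_iff, forall_and]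
  refine and_congr_right' ⟨fun h k _ => h k, fun h k => ?_⟩
  rcases le_or_gt A k with hk | hk
  · exact h k hk
  · rw [Nat.sub_eq_zero_of_le hk.le]
    exact hP.isUnit_zero.dvd
end

section
/- A factorial basis B = ⟨P_k(n)⟩_{k=0}^∞ of K[x] is quasi-triangular if and only if its root sequence ρ = ⟨ρ_1, ρ_2, ρ_3, …⟩ satisfies both: (1) ⟨0, 1, 2, 3, …⟩ is a subsequence of ρ, and (2) for every n ∈ ℕ, the first appearance of n in ρ precedes the first appearance of n+1 in ρ. -/
/-!
Since `P_k(a) = 0` exactly when `a` is among `ρ_1, …, ρ_k`, the conditions `P_k(n) = 0` for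
`k > f(n)` and `P_{f(n)}(n) ≠ 0` say precisely that `f(n)` is the position of the first
appearance of `n` in `ρ`. So quasi-triangularity means that every `n` appears in `ρ` and the
first appearances are strictly increasing in `n`, which unwinds to conditions (1) and (2).
-/

open Polynomial Finset

/-- A factorial basis `P` is *quasi-triangular* if there is a strictly increasing
`f : ℕ → ℕ` with `P_k(n) = 0` for `k > f(n)` and `P_{f(n)}(n) ≠ 0`. -/
def IsQuasiTriangular (K : Type*) [Field K] (P : ℕ → Polynomial K) : Prop :=
  ∃ f : ℕ → ℕ, StrictMono f ∧
    (∀ k n : ℕ, f n < k → (P k).eval (n : K) = 0) ∧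
    (∀ n : ℕ, (P (f n)).eval (n : K) ≠ 0)

theorem eval_C_mul_prod_X_sub_C_eq_zero_iff {K : Type*} [Field K] {c : K} (hc : c ≠ 0)
    (ρ : ℕ → K) (k : ℕ) (a : K) :
    (C c * ∏ j ∈ range k, (X - C (ρ j))).eval a = 0 ↔ ∃ j < k, ρ j = a := by
  simp only [eval_mul, eval_C, eval_prod, eval_sub, eval_X, mul_eq_zero, hc, false_or,
    prod_eq_zero_iff, mem_range, sub_eq_zero, eq_comm (a := a)]

section FirstOccurrence

variable {α : Type*}

def IsFirstOccurrence (ρ : ℕ → α) (a : α) (i : ℕ) : Prop :=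
  ρ i = a ∧ ∀ j < i, ρ j ≠ a

theorem isFirstOccurrence_iff_exists_lt {ρ : ℕ → α} {a : α} {i : ℕ} :
    IsFirstOccurrence ρ a i ↔ (∀ k, i < k → ∃ j < k, ρ j = a) ∧ ¬∃ j < i, ρ j = a := by
  refine ⟨fun ⟨hi, hmin⟩ ↦ ⟨fun k hk ↦ ⟨i, hk, hi⟩, fun ⟨j, hj, hρ⟩ ↦ hmin j hj hρ⟩, ?_⟩
  rintro ⟨hafter, hbefore⟩
  obtain ⟨j, hj, hρ⟩ := hafter (i + 1) i.lt_succ_self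
  have hji : j = i := (Nat.lt_succ_iff.mp hj).eq_of_not_lt fun hlt ↦ hbefore ⟨j, hlt, hρ⟩
  exact ⟨hji ▸ hρ, fun j hj hρ ↦ hbefore ⟨j, hj, hρ⟩⟩

theorem IsFirstOccurrence.le_of_eq {ρ : ℕ → α} {a : α} {i j : ℕ}
    (hi : IsFirstOccurrence ρ a i) (hj : ρ j = a) : i ≤ j :=
  not_lt.mp fun hlt ↦ hi.2 j hlt hj

theorem exists_isFirstOccurrence {ρ : ℕ → α} {a : α} (h : ∃ j, ρ j = a) :
    ∃ i, IsFirstOccurrence ρ a i := by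
  classical
  exact ⟨Nat.find h, Nat.find_spec h, fun _ ↦ Nat.find_min h⟩

theorem exists_strictMono_isFirstOccurrence_iff (ρ v : ℕ → α) :
    (∃ f : ℕ → ℕ, StrictMono f ∧ ∀ n, IsFirstOccurrence ρ (v n) (f n)) ↔
      (∃ g : ℕ → ℕ, StrictMono g ∧ ∀ n, ρ (g n) = v n) ∧
        ∀ n, ∃ j, ρ j = v n ∧ ∀ i, ρ i = v (n + 1) → j < i := by
  constructor
  · rintro ⟨f, hf, hfirst⟩
    refine ⟨⟨f, hf, fun n ↦ (hfirst n).1⟩, fun n ↦ ⟨f n, (hfirst n).1, fun i hi ↦ ?_⟩⟩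
    exact (hf n.lt_succ_self).trans_le ((hfirst (n + 1)).le_of_eq hi)
  · rintro ⟨⟨g, -, hg⟩, hbefore⟩
    choose f hfirst using fun n ↦ exists_isFirstOccurrence ⟨g n, hg n⟩
    refine ⟨f, strictMono_nat_of_lt_succ fun n ↦ ?_, hfirst⟩
    obtain ⟨j, hj, hji⟩ := hbefore n
    exact ((hfirst n).le_of_eq hj).trans_lt (hji _ (hfirst (n + 1)).1)

end FirstOccurrence

theorem isQuasiTriangular_iff_exists_strictMono_isFirstOccurrence {K : Type*} [Field K]
    (P : ℕ → Polynomial K) (ρ : ℕ → K) (c : ℕ → K) (hc : ∀ k, c k ≠ 0)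
    (hP : ∀ k, P k = C (c k) * ∏ j ∈ range k, (X - C (ρ j))) :
    IsQuasiTriangular K P ↔
      ∃ f : ℕ → ℕ, StrictMono f ∧ ∀ n : ℕ, IsFirstOccurrence ρ (n : K) (f n) := by
  have hroots (k : ℕ) (a : K) : (P k).eval a = 0 ↔ ∃ j < k, ρ j = a := by
    rw [hP k]
    exact eval_C_mul_prod_X_sub_C_eq_zero_iff (hc k) ρ k a
  simp only [IsQuasiTriangular, isFirstOccurrence_iff_exists_lt, ← hroots]
  refine exists_congr fun f ↦ and_congr_right fun _ ↦ ?_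
  rw [forall_comm, ← forall_and]

-- `ρ j` plays the role of the paper's `ρ_{j+1}`.
theorem quasiTriangular_iff_roots_general {K : Type*} [Field K]
    (P : ℕ → Polynomial K) (ρ : ℕ → K) (c : ℕ → K) (hc : ∀ k, c k ≠ 0)
    (hP : ∀ k : ℕ, P k = Polynomial.C (c k) *
      ∏ j ∈ Finset.range k, (X - Polynomial.C (ρ j))) :
    IsQuasiTriangular K P ↔
      ((∃ g : ℕ → ℕ, StrictMono g ∧ ∀ n : ℕ, ρ (g n) = (n : K)) ∧
       (∀ n : ℕ, ∃ j : ℕ, ρ j = (n : K) ∧ ∀ i : ℕ, ρ i = (n : K) + 1 → j < i)) := by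
  rw [isQuasiTriangular_iff_exists_strictMono_isFirstOccurrence P ρ c hc hP,
    exists_strictMono_isFirstOccurrence_iff ρ (fun n : ℕ ↦ (n : K))]
  simp only [Nat.cast_succ]

/-- A factorial basis with root sequence `ρ` (here `ρ j` plays the role of `ρ_{j+1}`) is
quasi-triangular iff (1) `⟨0,1,2,…⟩` is a subsequence of `ρ`, and (2) for every `n`, the
first appearance of `n` in `ρ` precedes the first appearance of `n+1` in `ρ`. -/
theorem quasiTriangular_iff_roots {K : Type*} [Field K] [CharZero K]
    (P : ℕ → Polynomial K) (ρ : ℕ → K) (c : ℕ → K) (hc : ∀ k, c k ≠ 0)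
    (hP : ∀ k : ℕ, P k = Polynomial.C (c k) *
      ∏ j ∈ Finset.range k, (X - Polynomial.C (ρ j))) :
    IsQuasiTriangular K P ↔
      ((∃ g : ℕ → ℕ, StrictMono g ∧ ∀ n : ℕ, ρ (g n) = (n : K)) ∧
       (∀ n : ℕ, ∃ j : ℕ, ρ j = (n : K) ∧ ∀ i : ℕ, ρ i = (n : K) + 1 → j < i)) :=
  quasiTriangular_iff_roots_general P ρ c hc hP
end

section
/- Let B = ⟨P_k⟩_{k=0}^∞ be a quasi-triangular factorial basis of K[x] with f : ℕ → ℕ as in the definition of quasi-triangularity. Then for every sequence a : ℕ → K there exists a sequence b : ℕ → K such that a_n = Σ_{k=0}^{f(n)} b_k P_k(n) for all n ∈ ℕ. -/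
open Polynomial Finset

/-!
The equations `a n = ∑_{k ≤ f n} b k * c k n` form a triangular system: as `f` is injective,
equation `n` is the only one whose highest unknown is `b (f n)`, and its coefficient `c (f n) n`
is nonzero. So the unknowns can be solved for in increasing order, those outside the range of `f`
being free (set to `0`). For the theorem, `c k n = P_k(n)`.
-/

section TriangularSystem

variable {K : Type*} [Field K]

noncomputable def triangularSolve (c : ℕ → ℕ → K) (f : ℕ → ℕ) (a : ℕ → K) : ℕ → K
  | k =>
    let n := Function.invFun f k
    if f n = k then (a n - ∑ j : Fin k, triangularSolve c f a j * c j n) / c k n else 0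
  decreasing_by exact j.isLt

theorem triangularSolve_apply_of_eq {c : ℕ → ℕ → K} {f : ℕ → ℕ} (hf : f.Injective) (a : ℕ → K)
    (n : ℕ) :
    triangularSolve c f a (f n) =
      (a n - ∑ j ∈ range (f n), triangularSolve c f a j * c j n) / c (f n) n := by
  rw [triangularSolve, Function.leftInverse_invFun hf n, if_pos rfl,
    Fin.sum_univ_eq_sum_range (fun j => triangularSolve c f a j * c j n)]

theorem triangularSolve_spec {c : ℕ → ℕ → K} {f : ℕ → ℕ} (hf : f.Injective)
    (hc : ∀ n, c (f n) n ≠ 0) (a : ℕ → K) (n : ℕ) :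
    a n = ∑ k ∈ range (f n + 1), triangularSolve c f a k * c k n := by
  rw [sum_range_succ, triangularSolve_apply_of_eq hf, div_mul_cancel₀ _ (hc n)]
  ring

end TriangularSystem

theorem quasiTriangular_invertible_general {K : Type*} [Field K] (P : ℕ → Polynomial K)
    (f : ℕ → ℕ) (hf : StrictMono f)
    (h1 : ∀ n : ℕ, (P (f n)).eval (n : K) ≠ 0)
    (a : ℕ → K) :
    ∃ b : ℕ → K, ∀ n : ℕ, a n = ∑ k ∈ Finset.range (f n + 1), b k * (P k).eval (n : K) :=
  ⟨triangularSolve (fun k n => (P k).eval (n : K)) f a, triangularSolve_spec hf.injective h1 a⟩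

/-- If `P` is a quasi-triangular factorial basis (with witness `f`), then every sequence
`a : ℕ → K` can be represented as `a_n = ∑_{k=0}^{f(n)} b_k P_k(n)` for some `b : ℕ → K`. -/
theorem quasiTriangular_invertible {K : Type*} [Field K] (P : ℕ → Polynomial K)
    (hP : IsFactorialBasis K P) (f : ℕ → ℕ) (hf : StrictMono f)
    (h0 : ∀ k n : ℕ, f n < k → (P k).eval (n : K) = 0)
    (h1 : ∀ n : ℕ, (P (f n)).eval (n : K) ≠ 0)
    (a : ℕ → K) :
    ∃ b : ℕ → K, ∀ n : ℕ, a n = ∑ k ∈ Finset.range (f n + 1), b k * (P k).eval (n : K) :=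
  quasiTriangular_invertible_general P f hf h1 a
end

section
/- Let a ∈ ℕ∖{0} and b ∈ K, and define P_k^{(a,b)}(x) = binom(a·x + b, k) = (1/k!)·∏_{j=0}^{k−1}(a·x + b − j) ∈ K[x]. Then: (1) the basis C_{a,b} = ⟨P_k^{(a,b)}(x)⟩_{k=0}^∞ is a factorial basis of K[x]; (2) C_{a,b} is (a,0)-compatible with the shift operator E, with E P_k^{(a,b)}(x) = Σ_{i=−a}^{0} binom(a, −i) P_{k+i}^{(a,b)}(x) for all k ∈ ℕ; and (3) if b ∈ ℕ then C_{a,b} is quasi-triangular, with f(n) = a·n + b. -/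
/-!
Evaluated at `x`, `genBinom a b k` is the binomial coefficient `Ring.choose (a * x + b) k`.
The shift turns `a * x + b` into `a + (a * x + b)`, so Chu–Vandermonde expands `E P_k` in the
`P_{k-j}` with coefficients `binom(a, j)`, which vanish for `j > a`. For `b, n ∈ ℕ` the value at
`n` is the natural binomial coefficient `binom(a * n + b, k)`, zero exactly when `k > a * n + b`.
-/

open Polynomial Finset

/-- The generalized binomial-coefficient polynomial
`binom(a·x + b, k) = (1/k!) ∏_{j=0}^{k-1} (a·x + b - j)`. -/
noncomputable def genBinom {K : Type*} [Field K] (a : ℕ) (b : K) (k : ℕ) : Polynomial K :=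
  Polynomial.C ((k.factorial : K))⁻¹ *
    ∏ j ∈ Finset.range k, ((a : K) • X + Polynomial.C (b - (j : K)))


theorem Ring.choose_eq_inv_factorial_mul_prod {K : Type*} [Field K] [CharZero K] (r : K) (k : ℕ) :
    Ring.choose r k = (k.factorial : K)⁻¹ * ∏ j ∈ range k, (r - j) := by
  rw [Ring.choose_eq_smul, smul_eq_mul, ← descPochhammer_eval_eq_prod_range,
    ← descPochhammer_map (algebraMap ℤ K), eval_map, ← aeval_def, aeval_eq_smeval]

theorem Finset.sum_Icc_neg_eq_sum_range {M : Type*} [AddCommMonoid M] (f : ℤ → M) (a : ℕ) :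
    ∑ i ∈ Icc (-(a : ℤ)) 0, f i = ∑ j ∈ range (a + 1), f (-j) := by
  refine (sum_nbij' (fun j : ℕ => -(j : ℤ)) (fun i => (-i).toNat) ?_ ?_ ?_ ?_ ?_).symm <;>
    intros <;> simp_all
  omega

section zext

variable {K : Type*} [Field K]

theorem zext_natCast_sub (P : ℕ → K[X]) (k j : ℕ) :
    zext P ((k : ℤ) - j) = if j ≤ k then P (k - j) else 0 := by
  unfold zext
  split_ifs <;> first | rfl | omega | (congr 1; omega)

theorem sum_range_choose_smul_zext (P : ℕ → K[X]) (a k : ℕ) :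
    ∑ j ∈ range (a + 1), (a.choose j : K) • zext P ((k : ℤ) - j) =
      ∑ j ∈ range (k + 1), (a.choose j : K) • P (k - j) := by
  simp only [zext_natCast_sub, smul_ite, smul_zero, ← sum_filter]
  refine sum_subset (fun j hj => ?_) fun j hjk hja => ?_
  · simp only [mem_filter, mem_range] at hj ⊢
    omega
  · simp only [mem_filter, mem_range, not_and, not_le] at hjk hja
    rw [Nat.choose_eq_zero_of_lt (by omega), Nat.cast_zero, zero_smul]

end zext

section genBinom

variable {K : Type*} [Field K] (a : ℕ) (b : K)

theorem eval_genBinom (k : ℕ) (x : K) :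
    (genBinom a b k).eval x =
      (k.factorial : K)⁻¹ * ∏ j ∈ range k, ((a : K) * x + b - j) := by
  simp only [genBinom, eval_mul, eval_C, eval_prod, eval_add, eval_smul, eval_X, smul_eq_mul,
    add_sub_assoc]

theorem genBinom_succ (k : ℕ) :
    genBinom a b (k + 1) =
      genBinom a b k * (C ((k : K) + 1)⁻¹ * ((a : K) • X + C (b - k))) := by
  have : ((k + 1).factorial : K)⁻¹ = (k.factorial : K)⁻¹ * ((k : K) + 1)⁻¹ := by
    push_cast [Nat.factorial_succ]
    rw [mul_inv, mul_comm]
  simp only [genBinom, prod_range_succ, this, map_mul]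
  ring

theorem genBinom_dvd_genBinom_succ (k : ℕ) : genBinom a b k ∣ genBinom a b (k + 1) :=
  ⟨_, genBinom_succ a b k⟩

variable [CharZero K]

theorem degree_genBinom {a : ℕ} (ha : a ≠ 0) (b : K) (k : ℕ) :
    (genBinom a b k).degree = k := by
  have hfactor : ∀ j ∈ range k, ((a : K) • X + C (b - j)).degree = 1 := fun j _ => by
    rw [smul_eq_C_mul]
    exact degree_linear (Nat.cast_ne_zero.mpr ha)
  rw [genBinom, degree_C_mul (inv_ne_zero (Nat.cast_ne_zero.mpr k.factorial_ne_zero)),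
    degree_prod, sum_congr rfl hfactor]
  simp

theorem eval_genBinom_eq_choose (k : ℕ) (x : K) :
    (genBinom a b k).eval x = Ring.choose ((a : K) * x + b) k := by
  rw [eval_genBinom, Ring.choose_eq_inv_factorial_mul_prod]

theorem eval_natCast_genBinom_natCast (bn k n : ℕ) :
    (genBinom a (bn : K) k).eval (n : K) = ((a * n + bn).choose k : K) := by
  rw [eval_genBinom_eq_choose, ← Ring.choose_natCast]
  push_cast
  rfl

/-- Chu–Vandermonde, since `a * (x + 1) + b = a + (a * x + b)`. -/
theorem taylor_one_genBinom (k : ℕ) :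
    taylor (1 : K) (genBinom a b k) =
      ∑ j ∈ range (k + 1), (a.choose j : K) • genBinom a b (k - j) := by
  refine Polynomial.funext fun x => ?_
  have hshift : (a : K) * (x + 1) + b = a + (a * x + b) := by ring
  rw [taylor_eval, eval_genBinom_eq_choose, hshift, Ring.add_choose_eq _ (Commute.all _ _),
    Nat.sum_antidiagonal_eq_sum_range_succ (fun i j => Ring.choose (a : K) i * Ring.choose _ j),
    eval_finsetSum]
  simp only [Ring.choose_natCast, eval_smul, smul_eq_mul, eval_genBinom_eq_choose]

end genBinom

/-- For `a ∈ ℕ∖{0}` and `b ∈ K`: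
(1) `C_{a,b} = ⟨binom(a·x+b, k)⟩_k` is a factorial basis of `K[x]`;
(2) it is `(a,0)`-compatible with the shift `E`, with
`E P_k = ∑_{i=-a}^{0} binom(a,-i) P_{k+i}`;
(3) if `b ∈ ℕ`, it is quasi-triangular with `f(n) = a·n + b`. -/
theorem genBinom_basis_props {K : Type*} [Field K] [CharZero K] (a : ℕ) (ha : 0 < a)
    (b : K) :
    IsFactorialBasis K (genBinom a b) ∧
    (∀ k : ℕ, Polynomial.taylor (1 : K) (genBinom a b k) =
      ∑ i ∈ Finset.Icc (-(a : ℤ)) 0,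
        ((a.choose (-i).toNat : K)) • zext (genBinom a b) ((k : ℤ) + i)) ∧
    (∀ bn : ℕ, b = (bn : K) →
      (StrictMono (fun n : ℕ => a * n + bn) ∧
       (∀ k n : ℕ, a * n + bn < k → (genBinom a b k).eval (n : K) = 0) ∧
       (∀ n : ℕ, (genBinom a b (a * n + bn)).eval (n : K) ≠ 0))) := by
  refine ⟨fun k => ⟨degree_genBinom ha.ne' b k, genBinom_dvd_genBinom_succ a b k⟩,
    fun k => ?_, ?_⟩
  · simp only [sum_Icc_neg_eq_sum_range, neg_neg, Int.toNat_natCast, ← sub_eq_add_neg,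
      sum_range_choose_smul_zext, taylor_one_genBinom]
  · rintro bn rfl
    refine ⟨(strictMono_mul_left_of_pos ha).add_const bn, fun k n hk => ?_, fun n => ?_⟩
    · rw [eval_natCast_genBinom_natCast, Nat.choose_eq_zero_of_lt hk, Nat.cast_zero]
    · rw [eval_natCast_genBinom_natCast, Nat.choose_self, Nat.cast_one]
      exact one_ne_zero
end

section
/- Let L = Σ_{i=0}^{r} p_i(x) E^i be a linear recurrence operator with polynomial coefficients p_i ∈ K[x] and p_r ≠ 0, where E is the shift operator. For any m ∈ ℕ, write L(binom(x, m)) = Σ_{j=0}^{∞} λ_j · binom(x, j) as the (unique, finitely supported) expansion in the binomial-coefficient basis. Then λ_j = 0 whenever m − j > r, and if m ≥ r then λ_{m−r} = p_r(m−r), i.e. the coefficient of binom(x, k) in the expansion of L(binom(x, k+r)) equals the value p_r(k) for every k ∈ ℕ. -/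
/-!
Evaluate both sides of the expansion at the natural numbers `n`: since `binom(n + i, m)`
vanishes for `n + i < m`, the left side is `0` for `n + r < m` and equals `p_r(n)` at
`n = m - r`, while the right side is `∑_j λ_j binom(n, j)`, a triangular system whose
coefficients can be read off successively at `n = 0, 1, 2, …`.
-/

open Polynomial Finset

/-- The binomial-coefficient polynomial `binom(x, k) = x(x-1)⋯(x-k+1)/k! ∈ K[x]`. -/
noncomputable def binomPoly (K : Type*) [Field K] (k : ℕ) : Polynomial K :=
  Polynomial.C ((k.factorial : K))⁻¹ *
    ∏ j ∈ Finset.range k, (X - Polynomial.C (j : K))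

lemma binomPoly_eval_natCast {K : Type*} [Field K] [CharZero K] (k n : ℕ) :
    (binomPoly K k).eval (n : K) = (n.choose k : K) := by
  rw [binomPoly, eval_mul, eval_C, eval_prod]
  simp only [eval_sub, eval_X, eval_C]
  rw [← descPochhammer_eval_eq_prod_range, descPochhammer_eval_eq_descFactorial,
    Nat.descFactorial_eq_factorial_mul_choose, Nat.cast_mul, inv_mul_cancel_left₀]
  exact_mod_cast k.factorial_ne_zero

section BinomialTransform

variable {R : Type*} [NonAssocSemiring R] {lam : ℕ → R} {N : ℕ}

lemma sum_range_mul_choose_eq_of_forall_lt (hvanish : ∀ j, N ≤ j → lam j = 0) {k : ℕ}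
    (hlow : ∀ j < k, lam j = 0) :
    ∑ j ∈ range N, lam j * (k.choose j : R) = lam k := by
  by_cases hk : k < N
  · rw [sum_eq_single_of_mem k (mem_range.mpr hk), Nat.choose_self, Nat.cast_one, mul_one]
    intro j _ hjk
    rcases hjk.lt_or_gt with hlt | hgt
    · rw [hlow j hlt, zero_mul]
    · rw [Nat.choose_eq_zero_of_lt hgt, Nat.cast_zero, mul_zero]
  · rw [hvanish k (not_lt.mp hk)]
    refine sum_eq_zero fun j hj => ?_
    rw [hlow j (by simp only [mem_range] at hj; omega), zero_mul]

lemma forall_lt_eq_zero_of_sum_range_mul_choose (hvanish : ∀ j, N ≤ j → lam j = 0) {k : ℕ}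
    (hzero : ∀ n < k, ∑ j ∈ range N, lam j * (n.choose j : R) = 0) :
    ∀ j < k, lam j = 0 := by
  intro j
  induction j using Nat.strong_induction_on with
  | _ j ih =>
    intro hj
    rw [← sum_range_mul_choose_eq_of_forall_lt hvanish fun i hi => ih i hi (hi.trans hj)]
    exact hzero j hj

end BinomialTransform

section ShiftedChoose

variable {R : Type*} [NonAssocSemiring R] (c : ℕ → R) (r m n : ℕ)

lemma sum_range_mul_add_choose_eq_zero (h : n + r < m) :
    ∑ i ∈ range (r + 1), c i * ((n + i).choose m : R) = 0 :=
  sum_eq_zero fun i hi => by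
    rw [Nat.choose_eq_zero_of_lt (by simp only [mem_range] at hi; omega), Nat.cast_zero,
      mul_zero]

lemma sum_range_mul_add_choose_eq_last (h : n + r = m) :
    ∑ i ∈ range (r + 1), c i * ((n + i).choose m : R) = c r := by
  rw [sum_eq_single_of_mem r (self_mem_range_succ r), h, Nat.choose_self, Nat.cast_one, mul_one]
  intro i hi hir
  rw [Nat.choose_eq_zero_of_lt (by simp only [mem_range] at hi; omega), Nat.cast_zero,
    mul_zero]

end ShiftedChoose

theorem binomBasis_leading_coeff_general {K : Type*} [Field K] [CharZero K]
    (r : ℕ) (p : ℕ → Polynomial K) (m : ℕ)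
    (lam : ℕ → K) (N : ℕ)
    (hexp : ∑ i ∈ Finset.range (r + 1), p i * Polynomial.taylor ((i : K)) (binomPoly K m) =
      ∑ j ∈ Finset.range N, lam j • binomPoly K j)
    (hvanish : ∀ j : ℕ, N ≤ j → lam j = 0) :
    (∀ j : ℕ, j + r < m → lam j = 0) ∧
    (r ≤ m → lam (m - r) = (p r).eval ((m - r : ℕ) : K)) := by
  have heval (n : ℕ) : ∑ j ∈ range N, lam j * (n.choose j : K) =
      ∑ i ∈ range (r + 1), (p i).eval (n : K) * ((n + i).choose m : K) := by
    simpa only [eval_finsetSum, eval_mul, eval_smul, taylor_eval, ← Nat.cast_add,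
      binomPoly_eval_natCast, smul_eq_mul] using (congrArg (eval (n : K)) hexp).symm
  have hlow : ∀ j < m - r, lam j = 0 :=
    forall_lt_eq_zero_of_sum_range_mul_choose hvanish fun n hn => by
      rw [heval, sum_range_mul_add_choose_eq_zero _ _ _ _ (by omega)]
  refine ⟨fun j hj => hlow j (by omega), fun hrm => ?_⟩
  rw [← sum_range_mul_choose_eq_of_forall_lt hvanish hlow, heval,
    sum_range_mul_add_choose_eq_last _ _ _ _ (by omega)]

/-- Let `L = ∑_{i=0}^{r} p_i(x) E^i` with `p_r ≠ 0`, and let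
`L (binom(x,m)) = ∑_j λ_j binom(x,j)` be the (finitely supported) expansion in the
binomial-coefficient basis.  Then `λ_j = 0` whenever `j + r < m`, and if `r ≤ m` then
`λ_{m-r} = p_r(m-r)`. -/
theorem binomBasis_leading_coeff {K : Type*} [Field K] [CharZero K]
    (r : ℕ) (p : ℕ → Polynomial K) (hp : p r ≠ 0) (m : ℕ)
    (lam : ℕ → K) (N : ℕ)
    (hexp : ∑ i ∈ Finset.range (r + 1), p i * Polynomial.taylor ((i : K)) (binomPoly K m) =
      ∑ j ∈ Finset.range N, lam j • binomPoly K j)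
    (hvanish : ∀ j : ℕ, N ≤ j → lam j = 0) :
    (∀ j : ℕ, j + r < m → lam j = 0) ∧
    (r ≤ m → lam (m - r) = (p r).eval ((m - r : ℕ) : K)) :=
  binomBasis_leading_coeff_general r p m lam N hexp hvanish
end

section
/- Let B_i = ⟨P_n^{(i)}(x)⟩_{n=0}^∞ for i = 1, …, F be factorial bases of K[x], let m ∈ ℕ∖{0} and c = (c_0, …, c_{m−1}) ∈ {1,…,F}^m, and let B = ⟨Q_n(x)⟩_{n=0}^∞ be the c-shuffled basis of B_1, …, B_F. Then B is a factorial basis of K[x]. Moreover, if every B_i is quasi-triangular, then B is quasi-triangular. -/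
/-!
Passing from `Q_n` to `Q_{n+1}` raises exactly one index, `e_{c(n mod m)}`, by one, and the
indices `e_i(n)` sum to `n`; so `Q_n ∣ Q_{n+1}` and `deg Q_n = n`. If `f_i` witnesses
quasi-triangularity of `B_i`, then `Q` is quasi-triangular with `f(n)` the largest `N` such that
`e_i(N) ≤ f_i(n)` for all `i`: the factor `P^{(i)}_{e_i(N)}` vanishes at `n` as soon as
`e_i(N) > f_i(n)`, and it divides `P^{(i)}_{f_i(n)}`, which does not vanish at `n`, otherwise.
-/

open Polynomial Finset

/-- `sCount c i t = s_i(t) = |{r < t : c_r = i}|`. -/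
def sCount (c : ℕ → ℕ) (i t : ℕ) : ℕ :=
  ((Finset.range t).filter (fun r => c r = i)).card

/-- The `c`-shuffled basis of the bases `P 1, …, P F`:
`Q_{mk+j} = ∏_{i=1}^{F} P^{(i)}_{k·s_i(m) + s_i(j)}`. -/
noncomputable def shuffled {K : Type*} [Field K] (F m : ℕ) (c : ℕ → ℕ)
    (P : ℕ → ℕ → Polynomial K) (n : ℕ) : Polynomial K :=
  ∏ i ∈ Finset.Icc 1 F, P i ((n / m) * sCount c i m + sCount c i (n % m))

open Filter

namespace IsFactorialBasis

variable {K : Type*} [Field K] {P : ℕ → K[X]}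

theorem dvd_of_le_s16 (hP : IsFactorialBasis K P) {k l : ℕ} (hkl : k ≤ l) : P k ∣ P l := by
  induction hkl with
  | refl => rfl
  | step _ ih => exact ih.trans (hP _).2

theorem eval_ne_zero_of_le (hP : IsFactorialBasis K P) {k l : ℕ} (hkl : k ≤ l) {x : K}
    (hl : (P l).eval x ≠ 0) : (P k).eval x ≠ 0 := fun hk =>
  hl (zero_dvd_iff.1 (hk ▸ eval_dvd (hP.dvd_of_le_s16 hkl)))

end IsFactorialBasis

section ProductBasis

variable {K ι : Type*} [Field K] {s : Finset ι} {P : ι → ℕ → K[X]} {e : ι → ℕ → ℕ}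

theorem isFactorialBasis_prod (hP : ∀ i ∈ s, IsFactorialBasis K (P i))
    (he_sum : ∀ N, ∑ i ∈ s, e i N = N) (he_mono : ∀ i ∈ s, Monotone (e i)) :
    IsFactorialBasis K (fun N => ∏ i ∈ s, P i (e i N)) := fun N => by
  refine ⟨?_, prod_dvd_prod_of_dvd _ _ fun i hi => (hP i hi).dvd_of_le_s16 (he_mono i hi N.le_succ)⟩
  rw [degree_prod, sum_congr rfl fun i hi => (hP i hi (e i N)).1, ← Nat.cast_sum, he_sum]

theorem isQuasiTriangular_prod (hP : ∀ i ∈ s, IsFactorialBasis K (P i))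
    (hqt : ∀ i ∈ s, IsQuasiTriangular K (P i)) (he_zero : ∀ i ∈ s, e i 0 = 0)
    (he_succ : ∀ i ∈ s, ∀ N, e i (N + 1) ≤ e i N + 1)
    (he_top : ∃ i ∈ s, Tendsto (e i) atTop atTop) :
    IsQuasiTriangular K (fun N => ∏ i ∈ s, P i (e i N)) := by
  choose! f hf_mono hf_zero hf_ne using hqt
  set S : ℕ → Set ℕ := fun n => {N | ∀ i ∈ s, e i N ≤ f i n}
  have hbdd : ∀ n, BddAbove (S n) := by
    obtain ⟨i₀, hi₀, htop⟩ := he_top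
    intro n
    obtain ⟨B, hB⟩ := eventually_atTop.1 (htop.eventually_gt_atTop (f i₀ n))
    exact ⟨B, fun N hN => le_of_not_gt fun hBN => (hN i₀ hi₀).not_gt (hB N hBN.le)⟩
  have hmem : ∀ n, sSup (S n) ∈ S n := fun n =>
    Nat.sSup_mem ⟨0, fun i hi => by simp [he_zero i hi]⟩ (hbdd n)
  refine ⟨fun n => sSup (S n), strictMono_nat_of_lt_succ fun n => ?_, fun k n hk => ?_,
    fun n => ?_⟩
  · refine Nat.lt_of_succ_le (le_csSup (hbdd _) fun i hi => ?_)
    calc e i (sSup (S n) + 1) ≤ e i (sSup (S n)) + 1 := he_succ i hi _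
      _ ≤ f i n + 1 := Nat.add_le_add_right (hmem n i hi) 1
      _ ≤ f i (n + 1) := hf_mono i hi n.lt_succ_self
  · have hk : k ∉ S n := fun h => hk.not_ge (le_csSup (hbdd n) h)
    obtain ⟨i, hi, hlt⟩ : ∃ i ∈ s, f i n < e i k := by simpa [S] using hk
    rw [eval_prod]
    exact prod_eq_zero hi (hf_zero i hi _ n hlt)
  · rw [eval_prod, prod_ne_zero_iff]
    exact fun i hi => (hP i hi).eval_ne_zero_of_le (hmem n i hi) (hf_ne i hi n)

end ProductBasis

section Shuffle

variable {c : ℕ → ℕ} {m : ℕ}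

theorem sCount_succ (i t : ℕ) :
    sCount c i (t + 1) = sCount c i t + if c t = i then 1 else 0 := by
  simp only [sCount, card_filter, sum_range_succ]

theorem sum_sCount {s : Finset ℕ} {t : ℕ} (hc : ∀ r < t, c r ∈ s) :
    ∑ i ∈ s, sCount c i t = t :=
  (card_eq_sum_card_fiberwise fun r hr => hc r (mem_range.1 hr)).symm.trans (card_range t)

theorem sCount_pos (hm : 0 < m) : 0 < sCount c (c 0) m :=
  card_pos.2 ⟨0, mem_filter.2 ⟨mem_range.2 hm, rfl⟩⟩

/-- The index `e_i(n)` of the statement. -/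
def shuffleIndex (m : ℕ) (c : ℕ → ℕ) (i n : ℕ) : ℕ :=
  (n / m) * sCount c i m + sCount c i (n % m)

theorem shuffled_eq_prod {K : Type*} [Field K] (F : ℕ) (P : ℕ → ℕ → K[X]) :
    shuffled F m c P = fun n => ∏ i ∈ Icc 1 F, P i (shuffleIndex m c i n) :=
  rfl

theorem shuffleIndex_zero (i : ℕ) : shuffleIndex m c i 0 = 0 := by
  simp [shuffleIndex, sCount]

theorem shuffleIndex_mul_add (i q : ℕ) {j : ℕ} (hj : j < m) :
    shuffleIndex m c i (m * q + j) = q * sCount c i m + sCount c i j := by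
  have hm : 0 < m := j.zero_le.trans_lt hj
  rw [shuffleIndex, Nat.mul_add_div hm, Nat.div_eq_of_lt hj, Nat.mul_add_mod,
    Nat.mod_eq_of_lt hj, add_zero]

theorem shuffleIndex_succ (hm : 0 < m) (i n : ℕ) :
    shuffleIndex m c i (n + 1) = shuffleIndex m c i n + if c (n % m) = i then 1 else 0 := by
  obtain ⟨q, j, hj, rfl⟩ : ∃ q j, j < m ∧ m * q + j = n :=
    ⟨n / m, n % m, Nat.mod_lt n hm, Nat.div_add_mod n m⟩
  rw [Nat.mul_add_mod, Nat.mod_eq_of_lt hj, shuffleIndex_mul_add i q hj]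
  rcases (show j + 1 ≤ m from hj).lt_or_eq with hj' | hjm
  · rw [add_assoc, shuffleIndex_mul_add i q hj', sCount_succ, add_assoc]
  · rw [show m * q + j + 1 = m * (q + 1) + 0 by rw [← hjm]; ring, shuffleIndex_mul_add i _ hm,
      ← hjm, sCount_succ]
    simp only [sCount, range_zero, filter_empty, card_empty]
    ring

theorem shuffleIndex_succ_le (hm : 0 < m) (i n : ℕ) :
    shuffleIndex m c i (n + 1) ≤ shuffleIndex m c i n + 1 := by
  rw [shuffleIndex_succ hm]
  split_ifs <;> omega

theorem shuffleIndex_monotone (hm : 0 < m) (i : ℕ) : Monotone (shuffleIndex m c i) :=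
  monotone_nat_of_le_succ fun n => (shuffleIndex_succ hm i n).symm ▸ Nat.le_add_right _ _

theorem sum_shuffleIndex {s : Finset ℕ} (hm : 0 < m) (hc : ∀ r < m, c r ∈ s) (n : ℕ) :
    ∑ i ∈ s, shuffleIndex m c i n = n := by
  simp only [shuffleIndex, sum_add_distrib, ← mul_sum]
  rw [sum_sCount hc, sum_sCount fun r hr => hc r (hr.trans (Nat.mod_lt n hm)),
    Nat.div_add_mod']

theorem tendsto_shuffleIndex_atTop (hm : 0 < m) {i : ℕ} (hi : 0 < sCount c i m) :
    Tendsto (shuffleIndex m c i) atTop atTop :=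
  tendsto_atTop_mono (fun _ => (Nat.le_mul_of_pos_right _ hi).trans (Nat.le_add_right _ _))
    (Nat.tendsto_div_const_atTop hm.ne')

end Shuffle

theorem shuffled_isFactorial_and_quasiTriangular_general {K : Type*} [Field K]
    (F m : ℕ) (hm : 0 < m)
    (c : ℕ → ℕ) (hc : ∀ r < m, 1 ≤ c r ∧ c r ≤ F)
    (P : ℕ → ℕ → Polynomial K)
    (hP : ∀ i : ℕ, 1 ≤ i → i ≤ F → IsFactorialBasis K (P i)) :
    IsFactorialBasis K (shuffled F m c P) ∧
    ((∀ i : ℕ, 1 ≤ i → i ≤ F → IsQuasiTriangular K (P i)) →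
      IsQuasiTriangular K (shuffled F m c P)) := by
  have hc' : ∀ r < m, c r ∈ Icc 1 F := fun r hr => mem_Icc.2 (hc r hr)
  have hP' : ∀ i ∈ Icc 1 F, IsFactorialBasis K (P i) := fun i hi =>
    hP i (mem_Icc.1 hi).1 (mem_Icc.1 hi).2
  rw [shuffled_eq_prod]
  refine ⟨isFactorialBasis_prod hP' (sum_shuffleIndex hm hc')
    (fun i _ => shuffleIndex_monotone hm i), fun hqt => ?_⟩
  exact isQuasiTriangular_prod hP' (fun i hi => hqt i (mem_Icc.1 hi).1 (mem_Icc.1 hi).2)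
    (fun i _ => shuffleIndex_zero i) (fun i _ => shuffleIndex_succ_le hm i)
    ⟨c 0, hc' 0 hm, tendsto_shuffleIndex_atTop hm (sCount_pos hm)⟩

/-- The `c`-shuffled basis of factorial bases is factorial; moreover, if every factor
basis is quasi-triangular, so is the shuffled basis. -/
theorem shuffled_isFactorial_and_quasiTriangular {K : Type*} [Field K]
    (F m : ℕ) (hF : 0 < F) (hm : 0 < m)
    (c : ℕ → ℕ) (hc : ∀ r < m, 1 ≤ c r ∧ c r ≤ F)
    (P : ℕ → ℕ → Polynomial K)
    (hP : ∀ i : ℕ, 1 ≤ i → i ≤ F → IsFactorialBasis K (P i)) :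
    IsFactorialBasis K (shuffled F m c P) ∧
    ((∀ i : ℕ, 1 ≤ i → i ≤ F → IsQuasiTriangular K (P i)) →
      IsQuasiTriangular K (shuffled F m c P)) :=
  shuffled_isFactorial_and_quasiTriangular_general F m hm c hc P hP
end

section
/- The sequence y : ℕ → ℚ defined by y_n = Σ_{k=0}^{n} binom(n,k)² · binom(n+k,k) satisfies Apéry's ζ(2)-recurrence: (n+2)²·y_{n+2} − (11n² + 33n + 25)·y_{n+1} − (n+1)²·y_n = 0 for all n ∈ ℕ. -/
/-!
Creative telescoping (Zeilberger). Writing `F(n, k) = binom(n,k)² binom(n+k,k)` for the summand,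
there is an explicit certificate `G(n, k)` with
`(n+1)²(n+2)² ((n+2)² F(n+2,k) − (11n²+33n+25) F(n+1,k) − (n+1)² F(n,k)) = G(n,k+1) − G(n,k)`.
All summands are supported in `k ≤ n + 2`, so summing over `k < n + 3` telescopes to
`G(n, n+3) − G(n, 0) = 0`.
-/

open Finset

/-- Apéry's ζ(2)-sequence: `y_n = ∑_{k=0}^{n} binom(n,k)² · binom(n+k,k)`. -/
def aperyZeta2 (n : ℕ) : ℚ :=
  ∑ k ∈ Finset.range (n + 1), ((n.choose k : ℚ)) ^ 2 * (((n + k).choose k : ℚ))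

namespace Nat

variable {R : Type*} [CommRing R]

theorem cast_choose_mul_succ (m k : ℕ) :
    (m.choose k : R) * (m + 1) = ((m + 1).choose k : R) * (m + 1 - k) := by
  rcases le_or_gt k (m + 1) with hk | hk
  · have := congrArg (Nat.cast : ℕ → R) (choose_mul_succ_eq m k)
    push_cast [Nat.cast_sub hk] at this
    exact this
  · simp [choose_eq_zero_of_lt hk, choose_eq_zero_of_lt (by omega : m < k)]

theorem cast_choose_succ_right (m k : ℕ) :
    (m.choose (k + 1) : R) * (k + 1) = (m.choose k : R) * (m - k) := by
  rcases le_or_gt k m with hk | hk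
  · have := congrArg (Nat.cast : ℕ → R) (choose_succ_right_eq m k)
    push_cast [Nat.cast_sub hk] at this
    exact this
  · simp [choose_eq_zero_of_lt hk, choose_eq_zero_of_lt (by omega : m < k + 1)]

variable {K : Type*} [Field K] [CharZero K]

theorem cast_choose_eq_div (m k : ℕ) :
    (m.choose k : K) = ((m + 1).choose k : K) * (m + 1 - k) / (m + 1) := by
  rw [eq_div_iff (cast_add_one_ne_zero m), cast_choose_mul_succ]

theorem cast_choose_add_succ_eq_div (m k : ℕ) :
    ((m + k + 1).choose k : K) = ((m + k).choose k : K) * (m + k + 1) / (m + 1) := by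
  rw [eq_div_iff (cast_add_one_ne_zero m)]
  have := cast_choose_mul_succ (R := K) (m + k) k
  push_cast at this
  linear_combination -this

theorem cast_choose_succ_right_eq_div (m k : ℕ) :
    (m.choose (k + 1) : K) = (m.choose k : K) * (m - k) / (k + 1) := by
  rw [eq_div_iff (cast_add_one_ne_zero k), cast_choose_succ_right]

end Nat

def aperyZeta2Summand (n k : ℕ) : ℚ :=
  (n.choose k : ℚ) ^ 2 * ((n + k).choose k : ℚ)

/-- Output of Zeilberger's algorithm on `aperyZeta2Summand`, scaled by `(n+1)²(n+2)²`. -/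
def aperyZeta2Certificate (n k : ℕ) : ℚ :=
  (k : ℚ) ^ 3 * ((n + 2).choose k : ℚ) ^ 2 * ((n + k).choose k : ℚ) *
    ((k : ℚ) ^ 2 + 7 * k - 30 + n * ((k : ℚ) ^ 2 + 13 * k - 67) + (n : ℚ) ^ 2 * (6 * k - 48)
      - 11 * (n : ℚ) ^ 3)

open Nat in
theorem aperyZeta2Summand_recurrence (n k : ℕ) :
    ((n : ℚ) + 1) ^ 2 * ((n : ℚ) + 2) ^ 2 *
      (((n : ℚ) + 2) ^ 2 * aperyZeta2Summand (n + 2) k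
        - (11 * (n : ℚ) ^ 2 + 33 * n + 25) * aperyZeta2Summand (n + 1) k
        - ((n : ℚ) + 1) ^ 2 * aperyZeta2Summand n k)
      = aperyZeta2Certificate n (k + 1) - aperyZeta2Certificate n k := by
  unfold aperyZeta2Summand aperyZeta2Certificate
  -- Express every binomial through `binom(n+2,k)` and `binom(n+k,k)`; what remains is an
  -- identity of rational functions in `n` and `k`.
  rw [show n + 2 + k = n + 1 + k + 1 by ring, cast_choose_add_succ_eq_div (n + 1) k,
    show n + 1 + k = n + k + 1 by ring, cast_choose_add_succ_eq_div n k,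
    show n + (k + 1) = n + k + 1 by ring, cast_choose_succ_right_eq_div (n + k + 1) k,
    cast_choose_add_succ_eq_div n k, cast_choose_succ_right_eq_div (n + 2) k,
    cast_choose_eq_div n k, cast_choose_eq_div (n + 1) k]
  push_cast
  field_simp
  ring

theorem aperyZeta2_eq_sum_range {n N : ℕ} (h : n + 1 ≤ N) :
    aperyZeta2 n = ∑ k ∈ range N, aperyZeta2Summand n k := by
  refine sum_subset (range_subset_range.2 h) fun k _ hk => ?_
  simp [Nat.choose_eq_zero_of_lt (not_lt.1 (mt mem_range.2 hk))]

/-- Apéry's ζ(2)-sequence satisfies Apéry's ζ(2)-recurrence: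
`(n+2)² y_{n+2} − (11n² + 33n + 25) y_{n+1} − (n+1)² y_n = 0` for all `n ∈ ℕ`. -/
theorem aperyZeta2_recurrence (n : ℕ) :
    ((n : ℚ) + 2) ^ 2 * aperyZeta2 (n + 2) -
      (11 * (n : ℚ) ^ 2 + 33 * (n : ℚ) + 25) * aperyZeta2 (n + 1) -
      ((n : ℚ) + 1) ^ 2 * aperyZeta2 n = 0 := by
  refine (mul_eq_zero.mp ?_).resolve_left
    (by positivity : ((n : ℚ) + 1) ^ 2 * ((n : ℚ) + 2) ^ 2 ≠ 0)
  have hG₀ : aperyZeta2Certificate n 0 = 0 := by simp [aperyZeta2Certificate]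
  have hG₃ : aperyZeta2Certificate n (n + 3) = 0 := by simp [aperyZeta2Certificate]
  rw [aperyZeta2_eq_sum_range (n := n + 2) (N := n + 3) le_rfl,
    aperyZeta2_eq_sum_range (n := n + 1) (N := n + 3) (by omega),
    aperyZeta2_eq_sum_range (n := n) (N := n + 3) (by omega),
    mul_sum, mul_sum, mul_sum, ← sum_sub_distrib, ← sum_sub_distrib, mul_sum]
  simp only [aperyZeta2Summand_recurrence, sum_range_sub, hG₀, hG₃, sub_self]
end
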